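/- arXiv:2407.18683 — 2 statements merged into one kernel-verified Lean document; each statement's English description precedes it below -/
import Mathlib

section
/- Removing a cycle from a walk does not increase its regularized cost: if a walk ω from s to d contains a repeated vertex, then the walk ω' obtained by deleting the cycle between the two occurrences satisfies c_λ(ω') ≤ c_λ(ω) for every λ ≥ 0, with strict inequality if λ > 0 and the deleted cycle is nonempty. -/
def IsWalk {V : Type*} (A : V → V → Prop) (s d : V) (p : List V) : Prop :=
  List.Chain' A p ∧ p.head? = some s ∧ p.getLast? = some d

noncomputable def bottleneck {V : Type*} (w : V → V → ℝ) (p : List V) : ℝ :=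
  ((p.zip p.tail).map (fun q => w q.1 q.2)).foldr max 0

def hops {V : Type*} (p : List V) : ℕ := p.length - 1

noncomputable def rcost {V : Type*} (w : V → V → ℝ) (lam : ℝ) (p : List V) : ℝ :=
  bottleneck w p + lam * (hops p : ℝ)

/-!
Cutting the cycle `v :: b ++ [v]` out of `a ++ v :: b ++ v :: c` leaves the walk `a ++ v :: c`
whose consecutive pairs are obtained from those of the original walk by deleting the ones
of the cycle. Hence its bottleneck, a maximum over a sublist, does not increase, while the hop
count drops by `b.length + 1 ≥ 1`.
-/

namespace List

variable {α : Type*}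

theorem zip_tail_append_cons (l : List α) (y : α) (r : List α) :
    (l ++ y :: r).zip (l ++ y :: r).tail = (l ++ [y]).zip (l ++ [y]).tail ++ (y :: r).zip r := by
  induction l with
  | nil => simp
  | cons x t ih =>
    cases t with
    | nil => simp
    | cons x' t' => simpa using ih

theorem zip_tail_sublist_of_remove_cycle (a b c : List α) (v : α) :
    (a ++ v :: c).zip (a ++ v :: c).tail
      <+ (a ++ v :: b ++ v :: c).zip (a ++ v :: b ++ v :: c).tail := by
  have hcycle : (v :: (b ++ v :: c)).zip (b ++ v :: c)
      = (v :: b ++ [v]).zip (v :: b ++ [v]).tail ++ (v :: c).zip c := by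
    simpa using zip_tail_append_cons (v :: b) v c
  rw [append_assoc, cons_append, zip_tail_append_cons a v c,
    zip_tail_append_cons a v (b ++ v :: c), hcycle]
  exact (sublist_append_right _ _).append_left _

theorem Sublist.foldr_max_le [LinearOrder α] {l₁ l₂ : List α} (h : l₁ <+ l₂) (x : α) :
    l₁.foldr max x ≤ l₂.foldr max x := by
  induction h with
  | slnil => rfl
  | cons _ _ ih => exact ih.trans (le_max_right _ _)
  | cons_cons _ _ ih => exact max_le_max le_rfl ih

theorem IsChain.remove_cycle {R : α → α → Prop} {a b c : List α} {v : α}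
    (h : (a ++ v :: b ++ v :: c).IsChain R) : (a ++ v :: c).IsChain R := by
  rw [append_assoc, cons_append, isChain_split (l₂ := b ++ v :: c), ← cons_append,
    isChain_split (l₁ := v :: b)] at h
  exact isChain_split.2 ⟨h.1, h.2.2⟩

end List

section RemoveCycle

variable {V : Type*} (a b c : List V) (v : V)

theorem IsWalk.remove_cycle {A : V → V → Prop} {s d : V}
    (h : IsWalk A s d (a ++ v :: b ++ v :: c)) : IsWalk A s d (a ++ v :: c) := by
  obtain ⟨hchain, hhead, hlast⟩ := h
  refine ⟨hchain.remove_cycle, ?_, ?_⟩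
  · cases a <;> simpa using hhead
  · rwa [List.getLast?_append_cons] at hlast ⊢

theorem bottleneck_remove_cycle_le (w : V → V → ℝ) :
    bottleneck w (a ++ v :: c) ≤ bottleneck w (a ++ v :: b ++ v :: c) :=
  ((List.zip_tail_sublist_of_remove_cycle a b c v).map _).foldr_max_le 0

theorem hops_remove_cycle_lt : hops (a ++ v :: c) < hops (a ++ v :: b ++ v :: c) := by
  simp only [hops, List.length_append, List.length_cons]
  omega

theorem rcost_remove_cycle_le (w : V → V → ℝ) {lam : ℝ} (hlam : 0 ≤ lam) :
    rcost w lam (a ++ v :: c) ≤ rcost w lam (a ++ v :: b ++ v :: c) := by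
  have hhops : (hops (a ++ v :: c) : ℝ) ≤ hops (a ++ v :: b ++ v :: c) := by
    exact_mod_cast (hops_remove_cycle_lt a b c v).le
  exact add_le_add (bottleneck_remove_cycle_le a b c v w) (mul_le_mul_of_nonneg_left hhops hlam)

theorem rcost_remove_cycle_lt (w : V → V → ℝ) {lam : ℝ} (hlam : 0 < lam) :
    rcost w lam (a ++ v :: c) < rcost w lam (a ++ v :: b ++ v :: c) := by
  have hhops : (hops (a ++ v :: c) : ℝ) < hops (a ++ v :: b ++ v :: c) := by
    exact_mod_cast hops_remove_cycle_lt a b c v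
  exact add_lt_add_of_le_of_lt (bottleneck_remove_cycle_le a b c v w)
    (mul_lt_mul_of_pos_left hhops hlam)

end RemoveCycle

theorem stmt8_general {V : Type*} (A : V → V → Prop) (w : V → V → ℝ)
    (s d v : V) (a b c : List V)
    (hwalk : IsWalk A s d (a ++ v :: b ++ v :: c)) :
    IsWalk A s d (a ++ v :: c) ∧
    (∀ lam : ℝ, 0 ≤ lam →
      rcost w lam (a ++ v :: c) ≤ rcost w lam (a ++ v :: b ++ v :: c)) ∧
    (∀ lam : ℝ, 0 < lam →
      rcost w lam (a ++ v :: c) < rcost w lam (a ++ v :: b ++ v :: c)) :=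
  ⟨hwalk.remove_cycle, fun _ hlam => rcost_remove_cycle_le a b c v w hlam,
    fun _ hlam => rcost_remove_cycle_lt a b c v w hlam⟩

theorem stmt8 {V : Type*} (A : V → V → Prop) (w : V → V → ℝ)
    (hw : ∀ u v, 0 ≤ w u v) (s d v : V) (a b c : List V)
    (hwalk : IsWalk A s d (a ++ v :: b ++ v :: c)) :
    IsWalk A s d (a ++ v :: c) ∧
    (∀ lam : ℝ, 0 ≤ lam →
      rcost w lam (a ++ v :: c) ≤ rcost w lam (a ++ v :: b ++ v :: c)) ∧
    (∀ lam : ℝ, 0 < lam →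
      rcost w lam (a ++ v :: c) < rcost w lam (a ++ v :: b ++ v :: c)) :=
  stmt8_general A w s d v a b c hwalk
end

section
/- Prefix optimality can fail for the regularized bottleneck cost: there exists a weighted directed graph, λ > 0, and an optimal s–d path π* minimizing c_λ(π) = m(π) + λℓ(π) such that some prefix of π* from s to an intermediate vertex u is not an optimal s–u path under c_λ. Equivalently, exhibit a graph with vertices s, u, d, edge weights, and λ > 0 where the unique c_λ-optimal s–d path passes through u via a non-c_λ-optimal s–u subpath. -/
/-!
The optimal `s`–`d` path may have to reach `u` by the *short* but heavy edge `s → u`, because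
the heavy edge `u → d` dominates the bottleneck anyway, whereas on its own the `s`–`u` prefix
is beaten by a longer path of light edges: take `s → u` of weight `2`, `u → d` of weight `3`,
a detour `s → v → u` of weight `0`, and `λ = 1` (below, `s, v, u, d` are `0, 1, 2, 3`).
Every `s`–`d` walk ends with `u → d` and has at least two edges, so costs at least
`3 + 2 = 5`, which `s → u → d` attains; its prefix `s → u` costs `2 + 1 = 3`, while
`s → v → u` costs `0 + 2 = 2`.
-/

section Walks

variable {V : Type*} {A : V → V → Prop} {w : V → V → ℝ} {s d : V} {p : List V}

theorem le_bottleneck_of_mem_zip_tail {x y : V} (h : (x, y) ∈ p.zip p.tail) :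
    w x y ≤ bottleneck w p :=
  List.le_max_of_le' 0 (List.mem_map_of_mem h) le_rfl

theorem List.IsChain.exists_rel_getLast_mem_zip_tail :
    ∀ {a : V} {t : List V}, (a :: t).IsChain A → (a :: t).getLast? = some d → a ≠ d →
      ∃ y, A y d ∧ (y, d) ∈ (a :: t).zip t
  | a, [], _, hlast, had => absurd (by simpa using hlast) had
  | a, b :: t, hchain, hlast, _ => by
    obtain ⟨hab, hchain'⟩ := List.isChain_cons_cons.1 hchain
    by_cases hbd : b = d
    · exact ⟨a, hbd ▸ hab, by simp [hbd]⟩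
    · rw [List.getLast?_cons_cons] at hlast
      obtain ⟨y, hy, hmem⟩ := hchain'.exists_rel_getLast_mem_zip_tail hlast hbd
      exact ⟨y, hy, List.mem_cons_of_mem _ hmem⟩

theorem IsWalk.exists_last_edge (hp : IsWalk A s d p) (hsd : s ≠ d) :
    ∃ y, A y d ∧ (y, d) ∈ p.zip p.tail := by
  obtain ⟨hchain, hhead, hlast⟩ := hp
  match p, hhead with
  | a :: t, hhead =>
    obtain rfl : a = s := by simpa using hhead
    exact hchain.exists_rel_getLast_mem_zip_tail hlast hsd

theorem IsWalk.two_le_hops (hp : IsWalk A s d p) (hsd : s ≠ d) (hnot_adj : ¬A s d) :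
    2 ≤ hops p := by
  obtain ⟨hchain, hhead, hlast⟩ := hp
  match p, hchain, hhead, hlast with
  | [_], _, hhead, hlast => simp_all
  | [a, b], hchain, hhead, hlast =>
    simp only [List.head?_cons, List.getLast?_cons_cons, List.getLast?_singleton,
      Option.some.injEq] at hhead hlast
    subst hhead hlast
    exact absurd (List.isChain_pair.1 hchain) hnot_adj
  | _ :: _ :: _ :: _, _, _, _ => simp [hops]

theorem IsWalk.add_two_mul_le_rcost {lam c : ℝ} (hp : IsWalk A s d p) (hlam : 0 ≤ lam)
    (hsd : s ≠ d) (hnot_adj : ¬A s d) (hin : ∀ y, A y d → c ≤ w y d) :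
    c + 2 * lam ≤ rcost w lam p := by
  obtain ⟨y, hyd, hmem⟩ := hp.exists_last_edge hsd
  have hbottleneck : c ≤ bottleneck w p := (hin y hyd).trans (le_bottleneck_of_mem_zip_tail hmem)
  have hhops : (2 : ℝ) ≤ hops p := by exact_mod_cast hp.two_le_hops hsd hnot_adj
  unfold rcost
  linarith [mul_le_mul_of_nonneg_left hhops hlam]

end Walks

abbrev detourGraph : Fin 4 → Fin 4 → Prop := fun x y =>
  (x, y) ∈ [(0, 1), (0, 2), (1, 2), (2, 3)]

noncomputable def detourWeight (x y : Fin 4) : ℝ :=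
  if (x, y) = (0, 2) then 2 else if (x, y) = (2, 3) then 3 else 0

theorem stmt10 :
    ∃ (V : Type) (_ : Fintype V) (A : V → V → Prop) (w : V → V → ℝ)
      (lam : ℝ) (s u d : V) (πstar : List V),
      0 < lam ∧ (∀ x y : V, 0 ≤ w x y) ∧
      IsWalk A s d πstar ∧
      (∀ q : List V, IsWalk A s d q → rcost w lam πstar ≤ rcost w lam q) ∧
      ∃ pre : List V, pre <+: πstar ∧ pre.getLast? = some u ∧
        ∃ q : List V, IsWalk A s u q ∧ rcost w lam q < rcost w lam pre := by
  have hchain_opt : [0, 2, 3].IsChain detourGraph := by decide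
  have hchain_detour : [0, 1, 2].IsChain detourGraph := by decide
  refine ⟨Fin 4, inferInstance, detourGraph, detourWeight, 1, 0, 2, 3, [0, 2, 3], one_pos,
    ?nonneg, ⟨hchain_opt, rfl, rfl⟩, ?optimal, [0, 2], List.prefix_append _ [3], rfl,
    [0, 1, 2], ⟨hchain_detour, rfl, rfl⟩, ?cheaper⟩
  case nonneg => intro x y; unfold detourWeight; split_ifs <;> norm_num
  case optimal =>
    intro q hq
    have hin : ∀ y, detourGraph y 3 → 3 ≤ detourWeight y 3 := by
      intro y hy
      fin_cases y <;> simp_all [detourWeight]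
    have hstar : rcost detourWeight 1 [0, 2, 3] = 3 + 2 * 1 := by
      norm_num [rcost, bottleneck, hops, detourWeight, Fin.ext_iff]
    exact hstar ▸ hq.add_two_mul_le_rcost zero_le_one (by decide) (by decide) hin
  case cheaper => norm_num [rcost, bottleneck, hops, detourWeight, Fin.ext_iff]
end
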